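/- For every si-logic L, the logic L⁻ = IPC + {𝒥(X) : X a finite rooted poset not validating L} belongs to the fmp span of L, is axiomatizable by Jankov formulas, and is the only member of fmp(L) that is axiomatizable by Jankov formulas. -/

import Mathlib

/-- Intuitionistic propositional formulas over variables `p₀, p₁, …`. -/
inductive IForm : Type
  | var : ℕ → IForm
  | bot : IForm
  | and : IForm → IForm → IForm
  | or : IForm → IForm → IForm
  | imp : IForm → IForm → IForm

namespace IForm

/-- Uniform substitution. -/
def subst (σ : ℕ → IForm) : IForm → IForm
  | var n => σ n
  | bot => bot
  | and φ ψ => and (subst σ φ) (subst σ ψ)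
  | or φ ψ => or (subst σ φ) (subst σ ψ)
  | imp φ ψ => imp (subst σ φ) (subst σ ψ)

/-- Biconditional `φ ↔ ψ`. -/
def biimp (φ ψ : IForm) : IForm := and (imp φ ψ) (imp ψ φ)

end IForm

/-- The theorems of the intuitionistic propositional calculus `IPC`, given by a
standard Hilbert-style axiomatization (all axioms are schemes, so `IPC` is
closed under uniform substitution) together with modus ponens. -/
inductive IPC : IForm → Prop
  | ax1 (φ ψ : IForm) : IPC (φ.imp (ψ.imp φ))
  | ax2 (φ ψ χ : IForm) : IPC ((φ.imp (ψ.imp χ)).imp ((φ.imp ψ).imp (φ.imp χ)))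
  | andE1 (φ ψ : IForm) : IPC ((φ.and ψ).imp φ)
  | andE2 (φ ψ : IForm) : IPC ((φ.and ψ).imp ψ)
  | andI (φ ψ : IForm) : IPC (φ.imp (ψ.imp (φ.and ψ)))
  | orI1 (φ ψ : IForm) : IPC (φ.imp (φ.or ψ))
  | orI2 (φ ψ : IForm) : IPC (ψ.imp (φ.or ψ))
  | orE (φ ψ χ : IForm) : IPC ((φ.imp χ).imp ((ψ.imp χ).imp ((φ.or ψ).imp χ)))
  | exfalso (φ : IForm) : IPC (IForm.bot.imp φ)
  | mp (φ ψ : IForm) : IPC (φ.imp ψ) → IPC φ → IPC ψ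

/-- A superintuitionistic logic: a set of formulas containing `IPC` and closed
under modus ponens and uniform substitution. -/
def SuperIntuitionistic (L : Set IForm) : Prop :=
  (∀ φ, IPC φ → φ ∈ L) ∧
  (∀ φ ψ, φ.imp ψ ∈ L → φ ∈ L → ψ ∈ L) ∧
  (∀ φ (σ : ℕ → IForm), φ ∈ L → φ.subst σ ∈ L)
/-- Kripke forcing on a poset, relative to a valuation by upsets. -/
def Forces {X : Type} [Preorder X] (v : ℕ → Set X) : X → IForm → Prop
  | x, .var n => x ∈ v n
  | _, .bot => False
  | x, .and φ ψ => Forces v x φ ∧ Forces v x ψ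
  | x, .or φ ψ => Forces v x φ ∨ Forces v x ψ
  | x, .imp φ ψ => ∀ y, x ≤ y → Forces v y φ → Forces v y ψ

/-- A formula is valid in a poset if it is forced at every point under every
valuation by upsets. -/
def ValidIn (X : Type) [Preorder X] (φ : IForm) : Prop :=
  ∀ v : ℕ → Set X, (∀ n, IsUpperSet (v n)) → ∀ x : X, Forces v x φ

/-- A poset validates a logic if every formula of the logic is valid in it. -/
def ValidLogic (X : Type) [Preorder X] (L : Set IForm) : Prop :=
  ∀ φ ∈ L, ValidIn X φ

/-- `Fin(L) = Fin(L')`: the two logics are validated by the same finite posets. -/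
def SameFinPosets (L L' : Set IForm) : Prop :=
  ∀ (X : Type) [Fintype X] [PartialOrder X], ValidLogic X L ↔ ValidLogic X L'

/-- The fmp span of a logic: the si-logics validated by the same finite posets. -/
def fmpSpan (L : Set IForm) : Set (Set IForm) :=
  {L' | SuperIntuitionistic L' ∧ SameFinPosets L L'}

/-- The degree of the finite model property of a logic. -/
def degFmp (L : Set IForm) : Cardinal :=
  Cardinal.mk (fmpSpan L)
/-- `IPC + Ax`: the least si-logic containing `Ax`. -/
def IPCPlus (Ax : Set IForm) : Set IForm :=
  {φ | ∀ L : Set IForm, SuperIntuitionistic L → Ax ⊆ L → φ ∈ L}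
/-- The upsets of a preorder. -/
abbrev Ups (X : Type) [Preorder X] : Type := {U : Set X // IsUpperSet U}

/-- Intersection of upsets. -/
def upsInter {X : Type} [Preorder X] (U V : Ups X) : Ups X := ⟨U.1 ∩ V.1, U.2.inter V.2⟩

/-- Union of upsets. -/
def upsUnion {X : Type} [Preorder X] (U V : Ups X) : Ups X := ⟨U.1 ∪ V.1, U.2.union V.2⟩

/-- Heyting implication of upsets: `U → V = {x : ↑x ∩ U ⊆ V}`. -/
def upsHimp {X : Type} [Preorder X] (U V : Ups X) : Ups X :=
  ⟨{x | ∀ y, x ≤ y → y ∈ U.1 → y ∈ V.1}, by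
    intro a b hab ha y hby hyU
    exact ha y (le_trans hab hby) hyU⟩

/-- The empty upset. -/
def upsEmpty {X : Type} [Preorder X] : Ups X := ⟨∅, isUpperSet_empty⟩

/-- Finite conjunction. -/
def bigConj : List IForm → IForm
  | [] => IForm.bot.imp IForm.bot
  | φ :: l => φ.and (bigConj l)

/-- The Jankov formula of a finite rooted poset `X` with root `r`: choosing a
distinct variable `p_U` for each upset `U` of `X`, it is `δ → p_s`, where `δ`
is the conjunction of `p_{U∩V} ↔ p_U ∧ p_V`, `p_{U∪V} ↔ p_U ∨ p_V`,
`p_{U→V} ↔ (p_U → p_V)` over all upsets `U, V`, together with `p_∅ ↔ ⊥`, and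
`s = X ∖ {r}` is the second largest element of `Up(X)`. -/
noncomputable def jankov (X : Type) [Fintype X] [PartialOrder X] (r : X)
    (hr : ∀ x, r ≤ x) : IForm :=
  letI : Fintype (Ups X) := Fintype.ofFinite _
  let e : Ups X ≃ Fin (Fintype.card (Ups X)) := Fintype.equivFin (Ups X)
  let p : Ups X → IForm := fun U => IForm.var (e U).val
  let all : List (Ups X) := (List.finRange (Fintype.card (Ups X))).map e.symm
  let triple : Ups X → Ups X → IForm := fun U V =>
    ((p (upsInter U V)).biimp ((p U).and (p V))).and
      (((p (upsUnion U V)).biimp ((p U).or (p V))).and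
        ((p (upsHimp U V)).biimp ((p U).imp (p V))))
  let δ : IForm :=
    (bigConj (all.map fun U => bigConj (all.map fun V => triple U V))).and
      ((p upsEmpty).biimp IForm.bot)
  let s : Ups X := ⟨Set.univ \ {r}, by
    intro a b hab ha
    simp only [Set.mem_diff, Set.mem_univ, Set.mem_singleton_iff, true_and] at ha ⊢
    intro hb
    exact ha (le_antisymm (hb ▸ hab) (hr a))⟩
  δ.imp (p s)

/-- A formula is a Jankov formula if it is the Jankov formula of some finite
rooted poset. -/
def IsJankovFormula (φ : IForm) : Prop :=
  ∃ (X : Type) (i1 : Fintype X) (i2 : PartialOrder X) (r : X)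
    (hr : ∀ x : X, i2.le r x), φ = @jankov X i1 i2 r hr
/-- An si-logic is axiomatizable by Jankov formulas if it is the least si-logic
containing some set of Jankov formulas of finite rooted posets. -/
def JankovAxiomatizable (L : Set IForm) : Prop :=
  ∃ Ax : Set IForm, (∀ φ ∈ Ax, IsJankovFormula φ) ∧ L = IPCPlus Ax
/-- `L⁻ = IPC + {𝒥(X) : X a finite rooted poset not validating L}`. -/
def LMinus (L : Set IForm) : Set IForm :=
  IPCPlus {φ | ∃ (X : Type) (i1 : Fintype X) (i2 : PartialOrder X) (r : X)
    (hr : ∀ x : X, i2.le r x),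
      ¬(@ValidLogic X i2.toPreorder L) ∧ φ = @jankov X i1 i2 r hr}

/-!
Jankov's lemma in syntactic form: let a finite rooted poset `X` refute a theorem `χ` of an
si-logic `M` under a valuation `v`. Substituting `p_{v(q)}` for each variable `q` of `χ` gives a
formula that, under the diagram `δ` of `Up(X)`, is provably equivalent to `p_U` with `U` the
value of `χ`; as `U` misses the root, `U ⊆ s` and hence `δ → p_s ∈ M`. Conversely `X` refutes
`𝒥(X)` at its root under `p_U ↦ U`. So `𝒥(X) ∈ M` iff `X ⊭ M`, which puts `L⁻` below every
member of `fmp(L)` and every Jankov-axiomatized member of `fmp(L)` below `L⁻`. Finally `L⁻` has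
the finite posets of `L`: a finite poset refuting `L` at `x` has the rooted generated subposet
`↑x` refuting `L`, and validity descends to generated subposets, so it refutes `𝒥(↑x) ∈ L⁻`.
-/

inductive Derivable : Set IForm → IForm → Prop
  | hyp {Γ : Set IForm} {φ : IForm} : φ ∈ Γ → Derivable Γ φ
  | ipc {Γ : Set IForm} {φ : IForm} : IPC φ → Derivable Γ φ
  | mp {Γ : Set IForm} {φ ψ : IForm} : Derivable Γ (φ.imp ψ) → Derivable Γ φ → Derivable Γ ψ

theorem IPC.imp_self (φ : IForm) : IPC (φ.imp φ) :=
  IPC.mp _ _ (IPC.mp _ _ (IPC.ax2 φ (φ.imp φ) φ) (IPC.ax1 φ (φ.imp φ))) (IPC.ax1 φ φ)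

namespace Derivable

variable {Γ Δ : Set IForm} {φ ψ φ' ψ' χ : IForm}

theorem mono (h : Derivable Γ φ) (hΓ : Γ ⊆ Δ) : Derivable Δ φ := by
  induction h with
  | hyp h => exact hyp (hΓ h)
  | ipc h => exact ipc h
  | mp _ _ ih₁ ih₂ => exact mp ih₁ ih₂

theorem weaken (h : Derivable Γ φ) : Derivable (insert ψ Γ) φ :=
  h.mono (Set.subset_insert _ _)

theorem head : Derivable (insert φ Γ) φ := hyp (Set.mem_insert _ _)

theorem imp_intro (h : Derivable (insert ψ Γ) φ) : Derivable Γ (ψ.imp φ) := by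
  induction h with
  | hyp h =>
    rcases Set.mem_insert_iff.mp h with rfl | h
    · exact ipc (IPC.imp_self _)
    · exact mp (ipc (IPC.ax1 _ _)) (hyp h)
  | ipc h => exact mp (ipc (IPC.ax1 _ _)) (ipc h)
  | mp _ _ ih₁ ih₂ => exact mp (mp (ipc (IPC.ax2 _ _ _)) ih₁) ih₂

theorem and_left (h : Derivable Γ (φ.and ψ)) : Derivable Γ φ := mp (ipc (IPC.andE1 _ _)) h

theorem and_right (h : Derivable Γ (φ.and ψ)) : Derivable Γ ψ := mp (ipc (IPC.andE2 _ _)) h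

theorem and_intro (h₁ : Derivable Γ φ) (h₂ : Derivable Γ ψ) : Derivable Γ (φ.and ψ) :=
  mp (mp (ipc (IPC.andI _ _)) h₁) h₂

theorem or_inl (h : Derivable Γ φ) : Derivable Γ (φ.or ψ) := mp (ipc (IPC.orI1 _ _)) h

theorem or_inr (h : Derivable Γ ψ) : Derivable Γ (φ.or ψ) := mp (ipc (IPC.orI2 _ _)) h

theorem or_elim (h : Derivable Γ (φ.or ψ)) (h₁ : Derivable Γ (φ.imp χ))
    (h₂ : Derivable Γ (ψ.imp χ)) : Derivable Γ χ :=
  mp (mp (mp (ipc (IPC.orE _ _ _)) h₁) h₂) h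

theorem of_bigConj {l : List IForm} (h : Derivable Γ (bigConj l)) (hφ : φ ∈ l) :
    Derivable Γ φ := by
  induction l with
  | nil => simp at hφ
  | cons a l ih =>
    rcases List.mem_cons.mp hφ with rfl | hφ
    · exact h.and_left
    · exact ih h.and_right hφ

theorem biimp_mp (h : Derivable Γ (φ.biimp ψ)) (hφ : Derivable Γ φ) : Derivable Γ ψ :=
  mp h.and_left hφ

theorem biimp_mpr (h : Derivable Γ (φ.biimp ψ)) (hψ : Derivable Γ ψ) : Derivable Γ φ :=
  mp h.and_right hψ

theorem biimp_refl (φ : IForm) : Derivable Γ (φ.biimp φ) :=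
  and_intro (ipc (IPC.imp_self _)) (ipc (IPC.imp_self _))

theorem biimp_symm (h : Derivable Γ (φ.biimp ψ)) : Derivable Γ (ψ.biimp φ) :=
  and_intro h.and_right h.and_left

theorem biimp_trans (h₁ : Derivable Γ (φ.biimp ψ)) (h₂ : Derivable Γ (ψ.biimp χ)) :
    Derivable Γ (φ.biimp χ) :=
  and_intro (imp_intro (h₂.weaken.biimp_mp (h₁.weaken.biimp_mp head)))
    (imp_intro (h₁.weaken.biimp_mpr (h₂.weaken.biimp_mpr head)))

theorem biimp_and (h₁ : Derivable Γ (φ.biimp φ')) (h₂ : Derivable Γ (ψ.biimp ψ')) :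
    Derivable Γ ((φ.and ψ).biimp (φ'.and ψ')) :=
  and_intro
    (imp_intro (and_intro (h₁.weaken.biimp_mp head.and_left) (h₂.weaken.biimp_mp head.and_right)))
    (imp_intro
      (and_intro (h₁.weaken.biimp_mpr head.and_left) (h₂.weaken.biimp_mpr head.and_right)))

theorem biimp_or (h₁ : Derivable Γ (φ.biimp φ')) (h₂ : Derivable Γ (ψ.biimp ψ')) :
    Derivable Γ ((φ.or ψ).biimp (φ'.or ψ')) :=
  and_intro
    (imp_intro (or_elim head (imp_intro (h₁.weaken.weaken.biimp_mp head).or_inl)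
      (imp_intro (h₂.weaken.weaken.biimp_mp head).or_inr)))
    (imp_intro (or_elim head (imp_intro (h₁.weaken.weaken.biimp_mpr head).or_inl)
      (imp_intro (h₂.weaken.weaken.biimp_mpr head).or_inr)))

theorem biimp_imp (h₁ : Derivable Γ (φ.biimp φ')) (h₂ : Derivable Γ (ψ.biimp ψ')) :
    Derivable Γ ((φ.imp ψ).biimp (φ'.imp ψ')) :=
  and_intro
    (imp_intro (imp_intro
      (h₂.weaken.weaken.biimp_mp (mp head.weaken (h₁.weaken.weaken.biimp_mpr head)))))
    (imp_intro (imp_intro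
      (h₂.weaken.weaken.biimp_mpr (mp head.weaken (h₁.weaken.weaken.biimp_mp head)))))

end Derivable

theorem SuperIntuitionistic.mem_of_derivable {M : Set IForm} (hM : SuperIntuitionistic M)
    {φ : IForm} (h : Derivable M φ) : φ ∈ M := by
  induction h with
  | hyp h => exact h
  | ipc h => exact hM.1 _ h
  | mp _ _ ih₁ ih₂ => exact hM.2.1 _ _ ih₁ ih₂

section IPCPlus

variable {Ax L : Set IForm}

theorem superIntuitionistic_IPCPlus (Ax : Set IForm) : SuperIntuitionistic (IPCPlus Ax) :=
  ⟨fun φ h _ hM _ => hM.1 φ h,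
   fun φ ψ h₁ h₂ M hM hAx => hM.2.1 φ ψ (h₁ M hM hAx) (h₂ M hM hAx),
   fun φ σ h M hM hAx => hM.2.2 φ σ (h M hM hAx)⟩

theorem subset_IPCPlus : Ax ⊆ IPCPlus Ax := fun _ h _ _ hAx => hAx h

theorem IPCPlus_subset (hL : SuperIntuitionistic L) (h : Ax ⊆ L) : IPCPlus Ax ⊆ L :=
  fun _ hφ => hφ L hL h

end IPCPlus

section Semantics

variable {X : Type} [Preorder X]

def evalUps (w : ℕ → Ups X) : IForm → Ups X
  | .var n => w n
  | .bot => upsEmpty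
  | .and φ ψ => upsInter (evalUps w φ) (evalUps w ψ)
  | .or φ ψ => upsUnion (evalUps w φ) (evalUps w ψ)
  | .imp φ ψ => upsHimp (evalUps w φ) (evalUps w ψ)

theorem forces_iff_mem_evalUps (w : ℕ → Ups X) (φ : IForm) (x : X) :
    Forces (fun n => (w n).1) x φ ↔ x ∈ (evalUps w φ).1 := by
  induction φ generalizing x with
  | var n => rfl
  | bot => simp [Forces, evalUps, upsEmpty]
  | and φ ψ ih₁ ih₂ => exact and_congr (ih₁ x) (ih₂ x)
  | or φ ψ ih₁ ih₂ => exact or_congr (ih₁ x) (ih₂ x)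
  | imp φ ψ ih₁ ih₂ =>
    exact forall_congr' fun y => imp_congr Iff.rfl (imp_congr (ih₁ y) (ih₂ y))

theorem forces_biimp_of_evalUps_eq {w : ℕ → Ups X} {φ ψ : IForm}
    (h : evalUps w φ = evalUps w ψ) (x : X) : Forces (fun n => (w n).1) x (φ.biimp ψ) := by
  have hiff (y : X) : Forces (fun n => (w n).1) y φ ↔ Forces (fun n => (w n).1) y ψ := by
    rw [forces_iff_mem_evalUps, forces_iff_mem_evalUps, h]
  exact ⟨fun y _ => (hiff y).mp, fun y _ => (hiff y).mpr⟩

theorem forces_bigConj (v : ℕ → Set X) (x : X) (l : List IForm) :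
    Forces v x (bigConj l) ↔ ∀ φ ∈ l, Forces v x φ := by
  induction l with
  | nil => simp [bigConj, Forces]
  | cons a l ih => simp [bigConj, Forces, ih]

end Semantics

section GeneratedSubposet

variable {Y : Type} [Preorder Y] (x₀ : Y)

theorem forces_Ici_iff (v : ℕ → Set Y) (φ : IForm) (z : Set.Ici x₀) :
    Forces (fun n => Subtype.val ⁻¹' v n) z φ ↔ Forces v z.1 φ := by
  induction φ generalizing z with
  | var n => rfl
  | bot => rfl
  | and φ ψ ih₁ ih₂ => exact and_congr (ih₁ z) (ih₂ z)
  | or φ ψ ih₁ ih₂ => exact or_congr (ih₁ z) (ih₂ z)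
  | imp φ ψ ih₁ ih₂ =>
    constructor
    · intro h y hzy hφ
      have hy : y ∈ Set.Ici x₀ := le_trans z.2 hzy
      exact (ih₂ ⟨y, hy⟩).mp (h ⟨y, hy⟩ hzy ((ih₁ ⟨y, hy⟩).mpr hφ))
    · exact fun h y hzy hφ => (ih₂ y).mpr (h y hzy ((ih₁ y).mp hφ))

theorem ValidIn.Ici {φ : IForm} (h : ValidIn Y φ) : ValidIn (Set.Ici x₀) φ := by
  intro w hw z
  have hup (n : ℕ) : IsUpperSet (Subtype.val '' w n) := by
    rintro a b hab ⟨u, hu, rfl⟩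
    exact ⟨⟨b, le_trans u.2 hab⟩, hw n (show u ≤ ⟨b, le_trans u.2 hab⟩ from hab) hu, rfl⟩
  have hforces := (forces_Ici_iff x₀ _ φ z).mpr (h _ hup z.1)
  simpa only [Subtype.val_injective.preimage_image] using hforces

end GeneratedSubposet

namespace Jankov

variable (X : Type) [Fintype X] [PartialOrder X] (r : X) (hr : ∀ x, r ≤ x)

-- The pieces of `jankov X r hr`, definitionally equal to its `let`-bindings.

noncomputable scoped instance fintypeUps : Fintype (Ups X) := Fintype.ofFinite _

noncomputable def index : Ups X ≃ Fin (Fintype.card (Ups X)) := Fintype.equivFin (Ups X)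

noncomputable def var (U : Ups X) : IForm := IForm.var (index X U).val

noncomputable def allUps : List (Ups X) :=
  (List.finRange (Fintype.card (Ups X))).map (index X).symm

noncomputable def clause (U V : Ups X) : IForm :=
  ((var X (upsInter U V)).biimp ((var X U).and (var X V))).and
    (((var X (upsUnion U V)).biimp ((var X U).or (var X V))).and
      ((var X (upsHimp U V)).biimp ((var X U).imp (var X V))))

noncomputable def diagram : IForm :=
  (bigConj ((allUps X).map fun U => bigConj ((allUps X).map fun V => clause X U V))).and
    ((var X upsEmpty).biimp IForm.bot)

def coatom : Ups X :=
  ⟨Set.univ \ {r}, by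
    intro a b hab ha
    simp only [Set.mem_sdiff, Set.mem_univ, Set.mem_singleton_iff, true_and] at ha ⊢
    intro hb
    exact ha (le_antisymm (hb ▸ hab) (hr a))⟩

theorem jankov_eq : jankov X r hr = (diagram X).imp (var X (coatom X r hr)) := rfl

theorem mem_allUps (U : Ups X) : U ∈ allUps X := by
  rw [← (index X).symm_apply_apply U]
  exact List.mem_map_of_mem (List.mem_finRange _)

/-- The valuation `p_U ↦ U`. -/
noncomputable def canonicalVal (n : ℕ) : Ups X :=
  if h : n < Fintype.card (Ups X) then (index X).symm ⟨n, h⟩ else upsEmpty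

@[simp]
theorem evalUps_canonicalVal_var (U : Ups X) : evalUps (canonicalVal X) (var X U) = U := by
  simp [var, evalUps, canonicalVal]

theorem forces_diagram (x : X) : Forces (fun n => (canonicalVal X n).1) x (diagram X) := by
  refine ⟨(forces_bigConj _ _ _).mpr ?_, forces_biimp_of_evalUps_eq ?_ x⟩
  · simp only [List.mem_map]
    rintro _ ⟨U, -, rfl⟩
    refine (forces_bigConj _ _ _).mpr fun φ hφ => ?_
    obtain ⟨V, -, rfl⟩ := List.mem_map.mp hφ
    exact ⟨forces_biimp_of_evalUps_eq (by simp [evalUps]) x,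
      forces_biimp_of_evalUps_eq (by simp [evalUps]) x,
      forces_biimp_of_evalUps_eq (by simp [evalUps]) x⟩
  · simp [evalUps]

theorem not_validIn : ¬ ValidIn X (jankov X r hr) := by
  rw [jankov_eq]
  intro h
  have hr_mem := (forces_iff_mem_evalUps (canonicalVal X) _ r).mp
    (h _ (fun n => (canonicalVal X n).2) r r le_rfl (forces_diagram X r))
  simp [coatom] at hr_mem

theorem diagram_derivable_clause (U V : Ups X) : Derivable {diagram X} (clause X U V) :=
  ((Derivable.hyp (Set.mem_singleton _)).and_left.of_bigConj (List.mem_map_of_mem (mem_allUps X U))).of_bigConj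
    (List.mem_map_of_mem (mem_allUps X V))

theorem diagram_derivable_subst_biimp (w : ℕ → Ups X) (φ : IForm) :
    Derivable {diagram X} ((φ.subst fun n => var X (w n)).biimp (var X (evalUps w φ))) := by
  induction φ with
  | var n => exact Derivable.biimp_refl _
  | bot => exact (Derivable.hyp (Set.mem_singleton _)).and_right.biimp_symm
  | and φ ψ ih₁ ih₂ =>
    exact (ih₁.biimp_and ih₂).biimp_trans (diagram_derivable_clause X _ _).and_left.biimp_symm
  | or φ ψ ih₁ ih₂ =>
    exact (ih₁.biimp_or ih₂).biimp_trans
      (diagram_derivable_clause X _ _).and_right.and_left.biimp_symm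
  | imp φ ψ ih₁ ih₂ =>
    exact (ih₁.biimp_imp ih₂).biimp_trans
      (diagram_derivable_clause X _ _).and_right.and_right.biimp_symm

theorem diagram_derivable_imp_coatom {U : Ups X} {x : X} (hx : x ∉ U.1) :
    Derivable {diagram X} ((var X U).imp (var X (coatom X r hr))) := by
  have hU : upsInter U (coatom X r hr) = U := by
    refine Subtype.ext (Set.inter_eq_left.mpr fun y hy => ⟨trivial, ?_⟩)
    rintro rfl
    exact hx (U.2 (hr x) hy)
  have hclause := (diagram_derivable_clause X U (coatom X r hr)).and_left
  rw [hU] at hclause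
  exact Derivable.imp_intro (hclause.weaken.biimp_mp Derivable.head).and_right

theorem mem_of_not_validLogic {M : Set IForm} (hM : SuperIntuitionistic M)
    (h : ¬ ValidLogic X M) : jankov X r hr ∈ M := by
  simp only [ValidLogic, ValidIn, not_forall] at h
  obtain ⟨χ, hχ, v, hv, x, hx⟩ := h
  set w : ℕ → Ups X := fun n => ⟨v n, hv n⟩
  have hx_notMem : x ∉ (evalUps w χ).1 := fun h => hx ((forces_iff_mem_evalUps w χ x).mpr h)
  have hsubst : χ.subst (fun n => var X (w n)) ∈ M := hM.2.2 _ _ hχ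
  have hcoatom : Derivable (insert (diagram X) M) (var X (coatom X r hr)) :=
    Derivable.mp ((diagram_derivable_imp_coatom X r hr hx_notMem).mono (by simp))
      (((diagram_derivable_subst_biimp X w χ).mono (by simp)).biimp_mp
        (Derivable.hyp (Set.mem_insert_of_mem _ hsubst)))
  exact hM.mem_of_derivable hcoatom.imp_intro

theorem mem_iff_not_validLogic {M : Set IForm} (hM : SuperIntuitionistic M) :
    jankov X r hr ∈ M ↔ ¬ ValidLogic X M :=
  ⟨fun h hX => not_validIn X r hr (hX _ h), mem_of_not_validLogic X r hr hM⟩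

end Jankov

def LMinusAxioms (L : Set IForm) : Set IForm :=
  {φ | ∃ (X : Type) (i1 : Fintype X) (i2 : PartialOrder X) (r : X)
    (hr : ∀ x : X, i2.le r x),
      ¬(@ValidLogic X i2.toPreorder L) ∧ φ = @jankov X i1 i2 r hr}

theorem jankovAxiomatizable_LMinus (L : Set IForm) : JankovAxiomatizable (LMinus L) := by
  refine ⟨LMinusAxioms L, ?_, rfl⟩
  rintro _ ⟨X, i1, i2, r, hr, -, rfl⟩
  exact ⟨X, i1, i2, r, hr, rfl⟩

theorem LMinus_subset_of_sameFinPosets {L M : Set IForm} (hM : SuperIntuitionistic M)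
    (h : SameFinPosets L M) : LMinus L ⊆ M := by
  refine IPCPlus_subset hM ?_
  rintro _ ⟨X, i1, i2, r, hr, hX, rfl⟩
  exact (Jankov.mem_iff_not_validLogic X r hr hM).mpr fun hM => hX ((h X).mpr hM)

theorem IPCPlus_subset_LMinus {L Ax : Set IForm} (hAx : ∀ φ ∈ Ax, IsJankovFormula φ)
    (h : SameFinPosets L (IPCPlus Ax)) : IPCPlus Ax ⊆ LMinus L := by
  refine IPCPlus_subset (superIntuitionistic_IPCPlus _) fun φ hφ => subset_IPCPlus ?_
  obtain ⟨X, i1, i2, r, hr, rfl⟩ := hAx φ hφ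
  have hX := (Jankov.mem_iff_not_validLogic X r hr (superIntuitionistic_IPCPlus Ax)).mp
    (subset_IPCPlus hφ)
  exact ⟨X, i1, i2, r, hr, fun hL => hX ((h X).mp hL), rfl⟩

theorem validLogic_of_validLogic_LMinus {L : Set IForm} (Y : Type) [Finite Y] [PartialOrder Y]
    (hY : ValidLogic Y (LMinus L)) : ValidLogic Y L := by
  by_contra hL
  simp only [ValidLogic, ValidIn, not_forall] at hL
  obtain ⟨χ, hχ, v, hv, x₀, hx₀⟩ := hL
  have hroot : ∀ z : Set.Ici x₀, ⟨x₀, le_rfl⟩ ≤ z := fun z => z.2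
  let _ : Fintype (Set.Ici x₀) := Fintype.ofFinite _
  have hIci : ¬ ValidLogic (Set.Ici x₀) L := fun h => hx₀ <|
    (forces_Ici_iff x₀ v χ _).mp (h χ hχ _ (fun n _ _ hab ha => hv n hab ha) ⟨x₀, le_rfl⟩)
  have hjankov : jankov (Set.Ici x₀) _ hroot ∈ LMinus L :=
    subset_IPCPlus ⟨_, _, _, _, hroot, hIci, rfl⟩
  exact Jankov.not_validIn _ _ hroot ((hY _ hjankov).Ici x₀)

theorem sameFinPosets_LMinus {L : Set IForm} (hL : SuperIntuitionistic L) :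
    SameFinPosets L (LMinus L) := fun Y _ _ =>
  ⟨fun hY φ hφ => hY φ (LMinus_subset_of_sameFinPosets hL (fun _ _ _ => Iff.rfl) hφ),
    validLogic_of_validLogic_LMinus Y⟩

/-- **Theorem.** For every si-logic `L`, the logic
`L⁻ = IPC + {𝒥(X) : X a finite rooted poset not validating L}` belongs to the
fmp span of `L`, is axiomatizable by Jankov formulas, and is the only member of
`fmp(L)` that is axiomatizable by Jankov formulas. -/
theorem LMinus_mem_jankovAx_unique (L : Set IForm) (hL : SuperIntuitionistic L) :
    LMinus L ∈ fmpSpan L ∧ JankovAxiomatizable (LMinus L) ∧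
      ∀ L' ∈ fmpSpan L, JankovAxiomatizable L' → L' = LMinus L := by
  refine ⟨⟨superIntuitionistic_IPCPlus _, sameFinPosets_LMinus hL⟩,
    jankovAxiomatizable_LMinus L, ?_⟩
  rintro L' ⟨hL', hsame⟩ ⟨Ax, hAx, rfl⟩
  exact (IPCPlus_subset_LMinus hAx hsame).antisymm (LMinus_subset_of_sameFinPosets hL' hsame)
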